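/- Laplace expansion for Schur functions: let α = (α_1,…,α_d) be a d-tuple and β = (β_1,…,β_{n−d}) an (n−d)-tuple of integers, and let α⊔β denote their concatenation as an n-tuple. Then, in the ring of symmetric functions, s_{α⊔β} = Σ_{μ ⊆ (n−d)^d} (−1)^{|μ|} s_{(α+(n−d)^d)/μ̂} · s_{β/μ~}, where the sum is over partitions μ fitting in a d×(n−d) rectangle, μ̂ = (n−d)^d − μ^← is the complement of μ in the rectangle, μ~ is the conjugate partition, and for integer tuples K, L one sets s_{K/L} = det(h_{k_i−i+j−l_j}). -/

import Mathlib

/-!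
Expand the determinant along its first `d` rows. Every permutation of `Fin (d + e)` factors
uniquely as a shuffle, increasing on the first `d` and on the last `e` positions, followed by a
permutation of each block. Shuffles correspond to partitions `μ` in the `d × e` box: the first
block goes to the columns `i + μ (d - 1 - i)`, the last one to the complementary columns
`d + l - μ~ l`. The inversions of this shuffle are the cells of `μ`, so its sign is `(-1) ^ |μ|`,
and the two complementary minors of the Jacobi–Trudi matrix are the skew determinants
`s_{(α + e^d)/μ̂}` and `s_{β/μ~}`.
-/

/-- The skew Jacobi–Trudi determinant `s_{K/L} = det(h_{K_i − i + j − L_j})_{1≤i,j≤m}` attached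
to arbitrary integer tuples `K, L`, where `h : ℤ → R` (with `h k = 0` for `k < 0`) plays the
role of the complete homogeneous symmetric functions. -/
noncomputable def skewJtDet {R : Type*} [CommRing R] (h : ℤ → R) (m : ℕ) (K L : Fin m → ℤ) : R :=
  Matrix.det (Matrix.of fun i j : Fin m => h (K i - (i : ℤ) + (j : ℤ) - L j))

open Finset

@[simp]
theorem Fin.castAdd_lt_natAdd {m n : ℕ} (i : Fin m) (l : Fin n) : castAdd n i < natAdd m l := by
  rw [lt_def, val_castAdd, val_natAdd]
  omega

@[simp]
theorem Fin.not_natAdd_lt_castAdd {m n : ℕ} (i : Fin m) (l : Fin n) :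
    ¬natAdd m l < castAdd n i :=
  (castAdd_lt_natAdd i l).asymm

theorem Fin.val_add_sub_le_of_strictMono {m n : ℕ} {f : Fin m → Fin n} (hf : StrictMono f)
    {i j : Fin m} (hij : i ≤ j) : (f i : ℕ) + (j - i) ≤ f j := by
  have hsub : (Icc i j).map ⟨f, hf.injective⟩ ⊆ Icc (f i) (f j) := by
    intro x hx
    obtain ⟨k, hk, rfl⟩ := mem_map.mp hx
    rw [mem_Icc] at hk ⊢
    exact ⟨hf.monotone hk.1, hf.monotone hk.2⟩
  have hcard := card_le_card hsub
  rw [card_map, card_Icc, card_Icc] at hcard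
  have hfij : (f i : ℕ) ≤ f j := hf.monotone hij
  rw [le_def] at hij
  omega

namespace Equiv.Perm

variable {m n : ℕ}

section Sign

variable (σ : Perm (Fin (m + n)))

theorem card_natAdd_lt_castAdd (h₁ : StrictMono (σ ∘ Fin.castAdd n)) (i : Fin m) :
    #{l | σ (Fin.natAdd m l) < σ (Fin.castAdd n i)} = (σ (Fin.castAdd n i) : ℕ) - i := by
  set a := σ (Fin.castAdd n i)
  have hcount : ∑ x, (if σ x < a then 1 else 0) = (a : ℕ) := by
    rw [Equiv.sum_comp σ (fun y => if y < a then 1 else 0), sum_boole, filter_gt_eq_Iio,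
      Fin.card_Iio, Nat.cast_id]
  rw [Fin.sum_univ_add] at hcount
  simp only [sum_boole, Nat.cast_id] at hcount
  have hfirst : #{i' : Fin m | σ (Fin.castAdd n i') < a} = i := by
    simp only [a, ← Function.comp_apply (f := σ), h₁.lt_iff_lt, filter_gt_eq_Iio, Fin.card_Iio]
  omega

theorem prod_Ioi_castAdd (h₁ : StrictMono (σ ∘ Fin.castAdd n)) (i : Fin m) :
    ∏ j ∈ Ioi (Fin.castAdd n i), (if σ (Fin.castAdd n i) < σ j then 1 else -1 : ℤˣ)
      = (-1) ^ #{l | σ (Fin.natAdd m l) < σ (Fin.castAdd n i)} := by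
  rw [← filter_lt_eq_Ioi, prod_filter, Fin.prod_univ_add, prod_eq_one, one_mul]
  · simp only [Fin.castAdd_lt_natAdd, if_true, prod_ite, prod_const_one, prod_const, one_mul]
    congr 2
    refine filter_congr fun l _ => ?_
    rw [not_lt, le_iff_lt_or_eq, or_iff_left (σ.injective.ne (Fin.castAdd_lt_natAdd i l).ne')]
  · intro i' _
    split_ifs with hlt hσ
    · rfl
    · exact absurd (h₁ ((Fin.strictMono_castAdd n).lt_iff_lt.mp hlt)) hσ
    · rfl

theorem prod_Ioi_natAdd (h₂ : StrictMono (σ ∘ Fin.natAdd m)) (l : Fin n) :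
    ∏ j ∈ Ioi (Fin.natAdd m l), (if σ (Fin.natAdd m l) < σ j then 1 else -1 : ℤˣ) = 1 := by
  rw [← filter_lt_eq_Ioi, prod_filter, Fin.prod_univ_add]
  simp only [Fin.not_natAdd_lt_castAdd, if_false, prod_const_one, one_mul]
  refine prod_eq_one fun l' _ => ?_
  split_ifs with hlt hσ
  · rfl
  · exact absurd (h₂ ((Fin.natAdd_lt_natAdd_iff m).mp hlt)) hσ
  · rfl

-- Only pairs `(castAdd i, natAdd l)` can be inversions, and `castAdd i` lies in
-- `σ (castAdd i) - i` of them.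
theorem sign_eq_of_strictMono_castAdd_natAdd (h₁ : StrictMono (σ ∘ Fin.castAdd n))
    (h₂ : StrictMono (σ ∘ Fin.natAdd m)) :
    sign σ = (-1) ^ ∑ i : Fin m, ((σ (Fin.castAdd n i) : ℕ) - i) := by
  rw [sign_eq_prod_prod_Ioi, Fin.prod_univ_add, ← prod_pow_eq_pow_sum]
  simp only [prod_Ioi_castAdd σ h₁, card_natAdd_lt_castAdd σ h₁, prod_Ioi_natAdd σ h₂,
    prod_const_one, mul_one]

end Sign

def finSumCongr (τ : Perm (Fin m)) (ρ : Perm (Fin n)) : Perm (Fin (m + n)) :=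
  finSumFinEquiv.permCongr (τ.sumCongr ρ)

@[simp]
theorem finSumCongr_castAdd (τ : Perm (Fin m)) (ρ : Perm (Fin n)) (i : Fin m) :
    finSumCongr τ ρ (Fin.castAdd n i) = Fin.castAdd n (τ i) := by
  simp [finSumCongr, permCongr_apply]

@[simp]
theorem finSumCongr_natAdd (τ : Perm (Fin m)) (ρ : Perm (Fin n)) (l : Fin n) :
    finSumCongr τ ρ (Fin.natAdd m l) = Fin.natAdd m (ρ l) := by
  simp [finSumCongr, permCongr_apply]

theorem sign_finSumCongr (τ : Perm (Fin m)) (ρ : Perm (Fin n)) :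
    sign (finSumCongr τ ρ) = sign τ * sign ρ := by
  rw [finSumCongr, sign_permCongr, sign_sumCongr]

theorem finSumCongr_inj {τ τ' : Perm (Fin m)} {ρ ρ' : Perm (Fin n)} :
    finSumCongr τ ρ = finSumCongr τ' ρ' ↔ τ = τ' ∧ ρ = ρ' := by
  rw [finSumCongr, finSumCongr, (permCongr finSumFinEquiv).injective.eq_iff]
  exact (sumCongrHom_injective (α := Fin m) (β := Fin n)).eq_iff.trans Prod.mk_inj

theorem exists_finSumCongr_eq (g : Perm (Fin (m + n)))
    (hg : ∀ i, ∃ j, g (Fin.castAdd n i) = Fin.castAdd n j) :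
    ∃ τ ρ, finSumCongr τ ρ = g := by
  have hmaps : Set.MapsTo (finSumFinEquiv.symm.permCongr g) (Set.range Sum.inl)
      (Set.range Sum.inl) := by
    rintro _ ⟨i, rfl⟩
    obtain ⟨j, hj⟩ := hg i
    exact ⟨j, by simp [permCongr_apply, hj]⟩
  obtain ⟨⟨τ, ρ⟩, hτρ⟩ := mem_sumCongrHom_range_of_perm_mapsTo_inl hmaps
  refine ⟨τ, ρ, Equiv.ext fun x => ?_⟩
  have hx := congrArg (· (finSumFinEquiv.symm x)) hτρ
  simp only [sumCongrHom_apply, permCongr_apply, symm_symm, apply_symm_apply] at hx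
  simp [finSumCongr, permCongr_apply, hx]

end Equiv.Perm

namespace BoxPartition

open Equiv Perm

variable {d e : ℕ} (μ : Fin d → Fin (e + 1))

def conj (l : ℕ) : ℕ :=
  #{i | l < (μ i : ℕ)}

theorem conj_le (l : ℕ) : conj μ l ≤ d :=
  (card_filter_le _ _).trans (card_univ.trans (Fintype.card_fin d)).le

theorem conj_anti {l l' : ℕ} (hl : l ≤ l') : conj μ l' ≤ conj μ l :=
  card_le_card (monotone_filter_right _ fun _ _ h => hl.trans_lt h)

variable {μ}

theorem lt_conj_iff (hμ : Antitone μ) (r : Fin d) (l : ℕ) : (r : ℕ) < conj μ l ↔ l < μ r := by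
  constructor
  · intro hr
    by_contra! hle
    have hsub : ({i | l < (μ i : ℕ)} : Finset (Fin d)) ⊆ Iio r := by
      intro i hi
      rw [mem_filter] at hi
      rw [mem_Iio]
      by_contra! hri
      exact absurd ((Fin.le_def.mp (hμ hri)).trans hle) (not_le.mpr hi.2)
    have := card_le_card hsub
    rw [Fin.card_Iio] at this
    exact absurd hr (not_lt.mpr this)
  · intro hl
    have hsub : Iic r ⊆ ({i | l < (μ i : ℕ)} : Finset (Fin d)) := by
      intro i hi
      rw [mem_filter]
      exact ⟨mem_univ i, hl.trans_le (hμ (mem_Iic.mp hi))⟩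
    have := card_le_card hsub
    rw [Fin.card_Iic] at this
    exact this

variable (μ)

def shuffle : Fin (d + e) → Fin (d + e) :=
  Fin.append (fun i => ⟨i + μ i.rev, by have := (μ i.rev).isLt; omega⟩)
    (fun l => ⟨d + l - conj μ l, by omega⟩)

@[simp]
theorem val_shuffle_castAdd (i : Fin d) : (shuffle μ (Fin.castAdd e i) : ℕ) = i + μ i.rev := by
  simp [shuffle]

@[simp]
theorem val_shuffle_natAdd (l : Fin e) : (shuffle μ (Fin.natAdd d l) : ℕ) = d + l - conj μ l := by
  simp [shuffle]

variable {μ}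

theorem strictMono_shuffle_castAdd (hμ : Antitone μ) : StrictMono (shuffle μ ∘ Fin.castAdd e) := by
  intro i j hij
  have := Fin.le_def.mp (hμ (Fin.rev_le_rev.mpr hij.le))
  rw [Fin.lt_def, Function.comp_apply, Function.comp_apply, val_shuffle_castAdd,
    val_shuffle_castAdd]
  rw [Fin.lt_def] at hij
  omega

variable (μ) in
theorem strictMono_shuffle_natAdd : StrictMono (shuffle μ ∘ Fin.natAdd d) := by
  intro l l' hll'
  have := conj_anti μ hll'.le
  have := conj_le μ l
  rw [Fin.lt_def, Function.comp_apply, Function.comp_apply, val_shuffle_natAdd,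
    val_shuffle_natAdd]
  rw [Fin.lt_def] at hll'
  omega

theorem shuffle_castAdd_ne_natAdd (hμ : Antitone μ) (i : Fin d) (l : Fin e) :
    shuffle μ (Fin.castAdd e i) ≠ shuffle μ (Fin.natAdd d l) := by
  intro h
  have hval := congrArg Fin.val h
  rw [val_shuffle_castAdd, val_shuffle_natAdd] at hval
  have hiff := lt_conj_iff hμ i.rev l
  have := conj_le μ l
  rw [Fin.val_rev] at hiff
  omega

theorem shuffle_injective (hμ : Antitone μ) : Function.Injective (shuffle μ) := by
  rw [← Fin.append_castAdd_natAdd (f := shuffle μ)]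
  exact Fin.append_injective_iff.mpr ⟨(strictMono_shuffle_castAdd hμ).injective,
    (strictMono_shuffle_natAdd μ).injective, shuffle_castAdd_ne_natAdd hμ⟩

noncomputable def shufflePerm (hμ : Antitone μ) : Perm (Fin (d + e)) :=
  Equiv.ofBijective (shuffle μ) (Finite.injective_iff_bijective.mp (shuffle_injective hμ))

@[simp]
theorem shufflePerm_apply (hμ : Antitone μ) (x : Fin (d + e)) : shufflePerm hμ x = shuffle μ x :=
  rfl

theorem sign_shufflePerm (hμ : Antitone μ) :
    sign (shufflePerm hμ) = (-1) ^ ∑ i, (μ i : ℕ) := by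
  rw [sign_eq_of_strictMono_castAdd_natAdd _ (strictMono_shuffle_castAdd hμ)
    (strictMono_shuffle_natAdd μ)]
  simp only [shufflePerm_apply, val_shuffle_castAdd, Nat.add_sub_cancel_left]
  exact congrArg _ (Equiv.sum_comp Fin.revPerm (fun i => (μ i : ℕ)))

theorem shuffle_comp_castAdd_injective {μ' : Fin d → Fin (e + 1)}
    (h : shuffle μ ∘ Fin.castAdd e = shuffle μ' ∘ Fin.castAdd e) : μ = μ' := by
  funext i
  have := congrArg Fin.val (congrFun h i.rev)
  simp only [Function.comp_apply, val_shuffle_castAdd, Fin.rev_rev] at this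
  exact Fin.ext (by omega)

theorem exists_antitone_shuffle_comp_castAdd_eq (f : Fin d → Fin (d + e)) (hf : StrictMono f) :
    ∃ μ : Fin d → Fin (e + 1), Antitone μ ∧ shuffle μ ∘ Fin.castAdd e = f := by
  have hlow (j : Fin d) : (j : ℕ) ≤ f j := by
    have := Fin.val_add_sub_le_of_strictMono hf (i := ⟨0, j.pos⟩) (j := j) (Nat.zero_le _)
    dsimp only at this
    omega
  have hup (j : Fin d) : (f j : ℕ) ≤ j + e := by
    have hd := j.pos
    have := Fin.val_add_sub_le_of_strictMono hf (j := ⟨d - 1, by omega⟩)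
      (Nat.le_sub_one_of_lt j.isLt)
    have := (f ⟨d - 1, by omega⟩).isLt
    dsimp only at *
    omega
  refine ⟨fun i => ⟨f i.rev - i.rev, by have := hup i.rev; omega⟩, fun a b hab => ?_, ?_⟩
  · have hrev := Fin.rev_le_rev.mpr hab
    have := Fin.val_add_sub_le_of_strictMono hf hrev
    have := hlow b.rev
    rw [Fin.le_def] at hrev ⊢
    dsimp only
    omega
  · funext i
    refine Fin.ext ?_
    rw [Function.comp_apply, val_shuffle_castAdd]
    simp only [Fin.rev_rev]
    have := hlow i
    omega

theorem shufflePerm_mul_finSumCongr_inj {μ' : Fin d → Fin (e + 1)} (hμ : Antitone μ)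
    (hμ' : Antitone μ') {τ τ' : Perm (Fin d)} {ρ ρ' : Perm (Fin e)}
    (h : shufflePerm hμ * finSumCongr τ ρ = shufflePerm hμ' * finSumCongr τ' ρ') :
    μ = μ' ∧ τ = τ' ∧ ρ = ρ' := by
  have hrange {ν : Fin d → Fin (e + 1)} (hν : Antitone ν) (τ : Perm (Fin d)) (ρ : Perm (Fin e)) :
      Set.range ((shufflePerm hν * finSumCongr τ ρ) ∘ Fin.castAdd e)
        = Set.range (shuffle ν ∘ Fin.castAdd e) := by
    have : (shufflePerm hν * finSumCongr τ ρ) ∘ Fin.castAdd e = shuffle ν ∘ Fin.castAdd e ∘ τ := by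
      funext i
      simp
    rw [this, ← Function.comp_assoc, τ.surjective.range_comp]
  have hμμ' := congrArg (fun σ : Perm (Fin (d + e)) => Set.range (σ ∘ Fin.castAdd e)) h
  simp only [hrange] at hμμ'
  obtain rfl := shuffle_comp_castAdd_injective
    (((strictMono_shuffle_castAdd hμ).range_inj (strictMono_shuffle_castAdd hμ')).mp hμμ')
  rw [mul_right_inj, finSumCongr_inj] at h
  exact ⟨rfl, h⟩

theorem exists_shufflePerm_mul_finSumCongr_eq (σ : Perm (Fin (d + e))) :
    ∃ μ : Fin d → Fin (e + 1), ∃ hμ : Antitone μ, ∃ τ ρ,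
      shufflePerm hμ * finSumCongr τ ρ = σ := by
  set S := univ.image (σ ∘ Fin.castAdd e)
  have hS : #S = d := by
    rw [card_image_of_injective _ (σ.injective.comp (Fin.castAdd_injective _ _)), card_fin]
  obtain ⟨μ, hμ, hf⟩ := exists_antitone_shuffle_comp_castAdd_eq _ (S.orderEmbOfFin hS).strictMono
  obtain ⟨τ, ρ, h⟩ := exists_finSumCongr_eq ((shufflePerm hμ)⁻¹ * σ) fun i => by
    obtain ⟨j, hj⟩ : σ (Fin.castAdd e i) ∈ Set.range (S.orderEmbOfFin hS) := by
      rw [range_orderEmbOfFin]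
      simp [S]
    refine ⟨j, ?_⟩
    rw [mul_apply, inv_eq_iff_eq, ← hj, ← hf]
    rfl
  exact ⟨μ, hμ, τ, ρ, by rw [h, mul_inv_cancel_left]⟩

end BoxPartition

open BoxPartition Equiv Perm in
open scoped Classical in
theorem Matrix.det_eq_sum_shuffle {R : Type*} [CommRing R] {d e : ℕ}
    (M : Matrix (Fin (d + e)) (Fin (d + e)) R) :
    M.det = ∑ μ ∈ ({μ | Antitone μ} : Finset (Fin d → Fin (e + 1))), (-1) ^ (∑ i, (μ i : ℕ)) *
      (M.submatrix (Fin.castAdd e) (shuffle μ ∘ Fin.castAdd e)).det *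
      (M.submatrix (Fin.natAdd d) (shuffle μ ∘ Fin.natAdd d)).det := by
  set term : (Fin d → Fin (e + 1)) × Perm (Fin d) × Perm (Fin e) → R := fun ⟨μ, τ, ρ⟩ =>
    (-1) ^ (∑ i, (μ i : ℕ)) *
      ((sign τ : ℤ) * ∏ i, M (Fin.castAdd e i) (shuffle μ (Fin.castAdd e (τ i)))) *
      ((sign ρ : ℤ) * ∏ l, M (Fin.natAdd d l) (shuffle μ (Fin.natAdd d (ρ l))))
  have hterm (μ : Fin d → Fin (e + 1)) : (-1) ^ (∑ i, (μ i : ℕ)) *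
      (M.submatrix (Fin.castAdd e) (shuffle μ ∘ Fin.castAdd e)).det *
      (M.submatrix (Fin.natAdd d) (shuffle μ ∘ Fin.natAdd d)).det
        = ∑ p : Perm (Fin d) × Perm (Fin e), term (μ, p) := by
    rw [← det_transpose, det_apply', ← det_transpose, det_apply', mul_assoc, sum_mul_sum,
      mul_sum, Fintype.sum_prod_type]
    refine sum_congr rfl fun τ _ => ?_
    rw [mul_sum]
    refine sum_congr rfl fun ρ _ => ?_
    simp only [term, transpose_apply, submatrix_apply, Function.comp_apply, mul_assoc]
  rw [sum_congr rfl fun μ _ => hterm μ, ← sum_product', ← det_transpose, det_apply']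
  symm
  refine sum_bij (fun p hp => shufflePerm (mem_filter.mp (mem_product.mp hp).1).2 *
    finSumCongr p.2.1 p.2.2) (fun _ _ => mem_univ _) ?_ ?_ ?_
  · rintro ⟨μ, τ, ρ⟩ hp ⟨μ', τ', ρ'⟩ hp' h
    obtain ⟨rfl, rfl, rfl⟩ := shufflePerm_mul_finSumCongr_inj _ _ h
    rfl
  · intro σ _
    obtain ⟨μ, hμ, τ, ρ, rfl⟩ := exists_shufflePerm_mul_finSumCongr_eq σ
    exact ⟨(μ, τ, ρ), mem_product.mpr ⟨mem_filter.mpr ⟨mem_univ _, hμ⟩, mem_univ _⟩, rfl⟩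
  · rintro ⟨μ, τ, ρ⟩ hp
    rw [Perm.sign_mul, sign_shufflePerm, sign_finSumCongr, Fin.prod_univ_add]
    simp only [Units.val_mul, Units.val_pow_eq_pow_val, Units.val_neg, Units.val_one, Int.cast_mul,
      Int.cast_pow, Int.cast_neg, Int.cast_one, Perm.coe_mul, Function.comp_apply,
      finSumCongr_castAdd, finSumCongr_natAdd, shufflePerm_apply, transpose_apply, term]
    ring

open scoped Classical in
/-- Laplace expansion for Schur functions. For a `d`-tuple `α` and an
`e`-tuple `β` (with `n = d + e`),
`s_{α⊔β} = Σ_{μ ⊆ (e)^d} (−1)^{|μ|} s_{(α+(e)^d)/μ̂} · s_{β/μ~}`, where `μ̂ = (e)^d − μ^←` is the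
complement of `μ` in the `d×e` rectangle and `μ~` is the conjugate partition. -/
theorem stmt8 {R : Type*} [CommRing R] (h : ℤ → R)
    (d e : ℕ) (α : Fin d → ℤ) (β : Fin e → ℤ) :
    skewJtDet h (d + e) (Fin.append α β) 0
      = ∑ μ ∈ Finset.univ.filter
            (fun μ : Fin d → Fin (e + 1) => ∀ a b : Fin d, a ≤ b → (μ b : ℕ) ≤ (μ a : ℕ)),
          (-1 : R) ^ (∑ i, (μ i : ℕ)) *
            skewJtDet h d (fun i => α i + (e : ℤ))
              (fun j => (e : ℤ) - ((μ ⟨d - 1 - (j : ℕ), by have := j.isLt; omega⟩ : ℕ) : ℤ)) *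
            skewJtDet h e β
              (fun j => ((Finset.univ.filter
                  (fun i : Fin d => (j : ℕ) + 1 ≤ (μ i : ℕ))).card : ℤ)) := by
  rw [skewJtDet, Matrix.det_eq_sum_shuffle]
  refine sum_congr (filter_congr fun μ _ => Iff.rfl) fun μ _ => ?_
  rw [skewJtDet, skewJtDet]
  congr 3 <;> ext i j
  · have hrev : j.rev = ⟨d - 1 - j, by omega⟩ :=
      Fin.ext (by rw [Fin.val_rev]; dsimp only; omega)
    simp only [Pi.zero_apply, sub_zero, Matrix.submatrix_apply, Function.comp_apply,
      Matrix.of_apply, Fin.append_left, Fin.val_castAdd, BoxPartition.val_shuffle_castAdd, hrev,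
      Nat.cast_add]
    congr 1
    ring
  · have hconj : #{i | (j : ℕ) + 1 ≤ (μ i : ℕ)} = BoxPartition.conj μ j := rfl
    have := BoxPartition.conj_le μ j
    simp only [Pi.zero_apply, sub_zero, Matrix.submatrix_apply, Function.comp_apply,
      Matrix.of_apply, Fin.append_right, Fin.val_natAdd, Nat.cast_add,
      BoxPartition.val_shuffle_natAdd, hconj,
      Nat.cast_sub (by omega : BoxPartition.conj μ j ≤ d + j)]
    congr 1
    ring
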